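/- Let g ∈ L^∞(𝕋) with |g| = 1 a.e. on 𝕋. If 𝒪 ∈ H² is outer and 𝒪 ∈ ker T_g, then C_ḡ 𝒪 is a maximal function of ker T_g whose outer factor equals 𝒪 up to a unimodular constant. Moreover, if two maximal functions of ker T_g have the same outer factor, then they differ by a unimodular constant multiple. -/

import Mathlib

open MeasureTheory Complex
open scoped Real ComplexConjugate ENNReal

noncomputable section

namespace ToeplitzKernels

/-- We model the unit circle `𝕋` as `AddCircle (2 * π)`. -/
abbrev UnitCircle := AddCircle (2 * Real.pi)

instance : Fact (0 < 2 * Real.pi) := ⟨by positivity⟩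

/-- The normalised Haar (arc-length) measure on the circle. -/
abbrev muT : Measure UnitCircle := AddCircle.haarAddCircle

/-- `L²(𝕋)`. -/
abbrev L2T := Lp ℂ 2 muT

/-- The coordinate function `z` on the circle. -/
def zf : UnitCircle → ℂ := fun x => fourier 1 x

/-- A (plain) function belongs to `H²`: it is square integrable and all its Fourier
coefficients of negative index vanish. -/
def InH2 (f : UnitCircle → ℂ) : Prop :=
  MemLp f 2 muT ∧ ∀ n : ℤ, n < 0 → fourierCoeff f n = 0

/-- `H²` as a subset of `L²`. -/
def H2 : Set L2T :=
  {u | ∀ n : ℤ, n < 0 → fourierCoeff (u : UnitCircle → ℂ) n = 0}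

/-- A function belongs to `H^∞`: it is a bounded member of `H²`. -/
def InHinf (f : UnitCircle → ℂ) : Prop :=
  InH2 f ∧ MemLp f ⊤ muT

/-- `f` is outer: `f ∈ H²` and the closed linear span of `{zⁿ f : n ≥ 0}` in `L²` is `H²`. -/
def IsOuter (f : UnitCircle → ℂ) : Prop :=
  InH2 f ∧
    closure ((Submodule.span ℂ
        {u : L2T | ∃ n : ℕ, (u : UnitCircle → ℂ) =ᵐ[muT] fun x => zf x ^ n * f x} :
          Submodule ℂ L2T) : Set L2T) = H2

/-- `f` is inner: `f ∈ H²` (hence in `H^∞`) and `|f| = 1` a.e. on `𝕋`. -/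
def IsInner (f : UnitCircle → ℂ) : Prop :=
  InH2 f ∧ ∀ᵐ x ∂muT, ‖f x‖ = 1

/-- The kernel of the Toeplitz operator `T_g`, as a subset of `L²`: those `f ∈ H²` with
`P⁺(g f) = 0`, i.e. all Fourier coefficients of `g·f` of index `≥ 0` vanish. -/
def kerT (g : UnitCircle → ℂ) : Set L2T :=
  {u | u ∈ H2 ∧ ∀ n : ℤ, 0 ≤ n →
    fourierCoeff (fun x => g x * (u : UnitCircle → ℂ) x) n = 0}

/-- Membership of (the a.e. class of) a plain function in `ker T_g`. -/
def InKerT (g f : UnitCircle → ℂ) : Prop :=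
  InH2 f ∧ ∀ n : ℤ, 0 ≤ n → fourierCoeff (fun x => g x * f x) n = 0

/-- The model space `K_θ = ker T_{θ̄}`. -/
def modelSpace (θ : UnitCircle → ℂ) : Set L2T :=
  kerT fun x => conj (θ x)

/-- `f` is a maximal function of `ker T_g`: `f ∈ H²` and `g f = z̄ Ō` a.e. on `𝕋`
for some outer `O ∈ H²` (equivalently, `ker T_g` is the smallest Toeplitz kernel
containing `f`). -/
def IsMaximal (g f : UnitCircle → ℂ) : Prop :=
  InH2 f ∧ ∃ O : UnitCircle → ℂ, IsOuter O ∧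
    (fun x => g x * f x) =ᵐ[muT] fun x => conj (zf x) * conj (O x)

/-- The set `w·S ⊆ L²`, for a set `S ⊆ L²` of square-integrable functions. -/
def mulSet (w : UnitCircle → ℂ) (S : Set L2T) : Set L2T :=
  {u | ∃ v ∈ S, (u : UnitCircle → ℂ) =ᵐ[muT] fun x => w x * (v : UnitCircle → ℂ) x}

/-- `w·S ⊆ L²(𝕋)`. -/
def mulMapsIntoL2 (w : UnitCircle → ℂ) (S : Set L2T) : Prop :=
  ∀ v ∈ S, MemLp (fun x => w x * (v : UnitCircle → ℂ) x) 2 muT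

/-- `w⁻¹·S ⊆ L²(𝕋)`. -/
def invMulMapsIntoL2 (w : UnitCircle → ℂ) (S : Set L2T) : Prop :=
  ∀ v ∈ S, MemLp (fun x => (w x)⁻¹ * (v : UnitCircle → ℂ) x) 2 muT

/-- An outer function `O` is square-rigid if `ker T_{z̄ Ō / O} = ℂ · O`. -/
def IsSquareRigidOuter (O : UnitCircle → ℂ) : Prop :=
  kerT (fun x => conj (zf x) * conj (O x) / O x)
    = {u : L2T | ∃ c : ℂ, (u : UnitCircle → ℂ) =ᵐ[muT] fun x => c * O x}

/-- `w ∈ H²` is square-rigid if the outer factor of `w` is square-rigid. -/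
def IsSquareRigid (w : UnitCircle → ℂ) : Prop :=
  ∃ I O : UnitCircle → ℂ, IsInner I ∧ IsOuter O ∧
    (w =ᵐ[muT] fun x => I x * O x) ∧ IsSquareRigidOuter O

/-- The (linear) dimension of a subset of `L²` (the rank of its linear span). -/
def setDim (S : Set L2T) : Cardinal :=
  Module.rank ℂ (Submodule.span ℂ S)

/-- The value at a point `l` of the open unit disc of the holomorphic extension of a
function `f ∈ H²` on the boundary. -/
def diskValue (f : UnitCircle → ℂ) (l : ℂ) : ℂ :=
  ∑' n : ℕ, fourierCoeff f (n : ℤ) * l ^ n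

/-- The reproducing kernel `k_λ^θ = (1 - conj (θ(λ)) θ)/(1 - λ̄ z)` (boundary values). -/
def kFun (θ : UnitCircle → ℂ) (l : ℂ) : UnitCircle → ℂ :=
  fun x => (1 - conj (diskValue θ l) * θ x) / (1 - conj l * zf x)

/-- The conjugate kernel `k̃_λ^θ = (θ - θ(λ))/(z - λ)` (boundary values). -/
def ktFun (θ : UnitCircle → ℂ) (l : ℂ) : UnitCircle → ℂ :=
  fun x => (θ x - diskValue θ l) / (zf x - l)

/-- The conjugation `C_ḡ f = ḡ z̄ f̄` associated to a unimodular symbol `g`. -/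
def conjC (g f : UnitCircle → ℂ) : UnitCircle → ℂ :=
  fun x => conj (g x) * conj (zf x) * conj (f x)

/-- `α` is a finite Blaschke product with exactly `k` zeroes in `𝔻` (with multiplicity). -/
def IsFiniteBlaschke (α : UnitCircle → ℂ) (k : ℕ) : Prop :=
  ∃ (c : ℂ) (a : Fin k → ℂ), ‖c‖ = 1 ∧ (∀ i, ‖a i‖ < 1) ∧
    α =ᵐ[muT] fun x => c * ∏ i, (zf x - a i) / (1 - conj (a i) * zf x)

/-! ### Auxiliary lemmas -/

lemma norm_zf (x : UnitCircle) : ‖zf x‖ = 1 := by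
  simp [zf, fourier_apply, Circle.norm_coe]

lemma zf_pow (k : ℕ) (x : UnitCircle) : zf x ^ k = fourier (k : ℤ) x := by
  induction k with
  | zero => simp [fourier_zero]
  | succ n ih =>
      have h : ((n : ℤ) + 1) = ((n + 1 : ℕ) : ℤ) := by push_cast; ring
      rw [pow_succ, ih, ← h, fourier_add, zf]

lemma unimod_mul_conj {z : ℂ} (h : ‖z‖ = 1) : z * conj z = 1 := by
  rw [Complex.mul_conj]
  simp [Complex.normSq_eq_norm_sq, h]

lemma unimod_conj_mul {z : ℂ} (h : ‖z‖ = 1) : conj z * z = 1 := by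
  rw [mul_comm]; exact unimod_mul_conj h

lemma fourierCoeff_congr {f g : UnitCircle → ℂ} (h : f =ᵐ[muT] g) (n : ℤ) :
    fourierCoeff f n = fourierCoeff g n := by
  unfold fourierCoeff
  exact integral_congr_ae (h.mono fun x hx => by simp only [hx])

lemma fourierCoeff_eq_integral (f : UnitCircle → ℂ) (n : ℤ) :
    fourierCoeff f n = ∫ x, fourier (-n) x * f x ∂muT := rfl

lemma fourierCoeff_conj (h : UnitCircle → ℂ) (n : ℤ) :
    fourierCoeff (fun x => conj (h x)) n = conj (fourierCoeff h (-n)) := by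
  rw [fourierCoeff_eq_integral, fourierCoeff_eq_integral, ← integral_conj]
  congr 1
  ext x
  rw [map_mul, neg_neg, ← fourier_neg]

lemma fourierCoeff_fourier_mul (m : ℤ) (h : UnitCircle → ℂ) (n : ℤ) :
    fourierCoeff (fun x => fourier m x * h x) n = fourierCoeff h (n - m) := by
  rw [fourierCoeff_eq_integral, fourierCoeff_eq_integral]
  congr 1
  ext x
  rw [← mul_assoc, ← fourier_add]
  congr 1
  rw [show -n + m = -(n - m) by ring]

lemma integral_fourier_eq_zero {m : ℤ} (hm : m ≠ 0) :
    (∫ x, fourier m x ∂muT) = 0 :=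
  integral_eq_zero_of_add_right_eq_neg (μ := muT)
    (fourier_add_half_inv_index hm (by positivity))

lemma fourierCoeff_const (c : ℂ) {n : ℤ} (hn : n ≠ 0) :
    fourierCoeff (fun _ : UnitCircle => c) n = 0 := by
  rw [fourierCoeff_eq_integral]
  simp_rw [mul_comm]
  rw [integral_const_mul, integral_fourier_eq_zero (neg_ne_zero.mpr hn), mul_zero]

lemma fourierCoeff_const_zero (c : ℂ) :
    fourierCoeff (fun _ : UnitCircle => c) 0 = c := by
  rw [fourierCoeff_eq_integral]
  simp [fourier_zero]

/-- The key "Smirnov-type" lemma: if `O` is outer, `φ` is a.e. bounded by 1, and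
`φ · O` has vanishing negative Fourier coefficients, then so does `φ`. -/
lemma smirnov (O φ : UnitCircle → ℂ) (hO : IsOuter O)
    (hφm : AEStronglyMeasurable φ muT) (hφb : ∀ᵐ x ∂muT, ‖φ x‖ ≤ 1)
    (hcoef : ∀ n : ℤ, n < 0 → fourierCoeff (fun x => φ x * O x) n = 0) :
    ∀ n : ℤ, n < 0 → fourierCoeff φ n = 0 := by
  intro n hn
  set ψf : UnitCircle → ℂ := fun x => conj (fourier (-n) x * φ x) with hψf
  have hψm : AEStronglyMeasurable ψf muT :=
    Complex.continuous_conj.comp_aestronglyMeasurable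
      (((fourier (-n)).continuous.aestronglyMeasurable).mul hφm)
  have hψ2 : MemLp ψf 2 muT := by
    refine (memLp_const (1 : ℂ)).of_le hψm ?_
    filter_upwards [hφb] with x hx
    simp only [hψf, RCLike.norm_conj, norm_mul, norm_one]
    calc ‖fourier (-n) x‖ * ‖φ x‖ ≤ 1 * 1 := by
          apply mul_le_mul _ hx (norm_nonneg _) zero_le_one
          simp [fourier_apply, Circle.norm_coe]
      _ = 1 := by simp
  set ψ : L2T := hψ2.toLp ψf with hψ
  have hgen : ∀ u ∈ {u : L2T | ∃ k : ℕ, (u : UnitCircle → ℂ) =ᵐ[muT] fun x => zf x ^ k * O x},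
      inner ℂ ψ u = (0 : ℂ) := by
    rintro u ⟨k, hk⟩
    rw [MeasureTheory.L2.inner_def]
    have hcoe : (ψ : UnitCircle → ℂ) =ᵐ[muT] ψf := hψ2.coeFn_toLp
    have h : ∀ᵐ x ∂muT, (inner ℂ (ψ x) (u x) : ℂ)
        = fourier (-(n - k)) x * (φ x * O x) := by
      filter_upwards [hcoe, hk] with x h1 h2
      rw [RCLike.inner_apply, h1, h2, hψf]
      simp only [map_mul, RingHomCompTriple.comp_apply, starRingEnd_self_apply,
        RingHom.id_apply, zf_pow]
      rw [show -(n - (k:ℤ)) = -n + k by ring, fourier_add]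
      ring
    rw [integral_congr_ae h, ← fourierCoeff_eq_integral]
    exact hcoef _ (by omega)
  have hclos : ∀ u ∈ H2, inner ℂ ψ u = (0 : ℂ) := by
    rw [← hO.2]
    set ℓ : L2T →L[ℂ] ℂ := innerSL ℂ ψ with hℓ
    have hker : (Submodule.span ℂ
        {u : L2T | ∃ k : ℕ, (u : UnitCircle → ℂ) =ᵐ[muT] fun x => zf x ^ k * O x} :
          Submodule ℂ L2T) ≤ LinearMap.ker (ℓ : L2T →ₗ[ℂ] ℂ) :=
      Submodule.span_le.mpr fun u hu => LinearMap.mem_ker.mpr (hgen u hu)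
    intro u hu
    have hcl : closure ((Submodule.span ℂ
        {u : L2T | ∃ k : ℕ, (u : UnitCircle → ℂ) =ᵐ[muT] fun x => zf x ^ k * O x} :
          Submodule ℂ L2T) : Set L2T) ⊆ (LinearMap.ker (ℓ : L2T →ₗ[ℂ] ℂ) : Set L2T) :=
      closure_minimal hker (ContinuousLinearMap.isClosed_ker ℓ)
    exact LinearMap.mem_ker.mp (hcl hu)
  set one : L2T := (memLp_const (1:ℂ)).toLp _ with hone
  have hone2 : one ∈ H2 := by
    intro m hm
    rw [fourierCoeff_congr ((memLp_const (1:ℂ)).coeFn_toLp)]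
    exact fourierCoeff_const 1 (by omega)
  have h0 := hclos one hone2
  rw [MeasureTheory.L2.inner_def] at h0
  have h : ∀ᵐ x ∂muT, (inner ℂ (ψ x) (one x) : ℂ) = fourier (-n) x * φ x := by
    filter_upwards [hψ2.coeFn_toLp, (memLp_const (1:ℂ)).coeFn_toLp] with x h1 h2
    rw [RCLike.inner_apply, h1, h2, hψf]
    simp only [map_mul, RingHomCompTriple.comp_apply, starRingEnd_self_apply,
      RingHom.id_apply]
    ring
  rw [integral_congr_ae h, ← fourierCoeff_eq_integral] at h0
  exact h0

lemma eq_const_of_fourierCoeff (φ : UnitCircle → ℂ) (hφ : MemLp φ 2 muT)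
    (h : ∀ n : ℤ, n ≠ 0 → fourierCoeff φ n = 0) :
    φ =ᵐ[muT] fun _ => fourierCoeff φ 0 := by
  set c : ℂ := fourierCoeff φ 0 with hc
  have h1 : hφ.toLp φ = (memLp_const c).toLp _ := by
    apply fourierBasis.repr.injective
    apply lp.ext
    funext i
    rw [fourierBasis_repr, fourierBasis_repr]
    rw [fourierCoeff_congr hφ.coeFn_toLp, fourierCoeff_congr (memLp_const c).coeFn_toLp]
    by_cases hi : i = 0
    · rw [hi, fourierCoeff_const_zero]
    · rw [h i hi, fourierCoeff_const c hi]
  calc φ =ᵐ[muT] hφ.toLp φ := hφ.coeFn_toLp.symm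
    _ = ((memLp_const c).toLp _ : UnitCircle → ℂ) := by rw [h1]
    _ =ᵐ[muT] fun _ => c := (memLp_const c).coeFn_toLp

/-- If `𝒪` is outer and `𝒪 ∈ ker T_g`, then `C_ḡ 𝒪` is a maximal function of
`ker T_g` with outer factor `𝒪` up to a unimodular constant; and two maximal functions with the
same outer factor differ by a unimodular constant multiple. -/
theorem conjC_of_outer_is_maximal
    (g Oo : UnitCircle → ℂ) (hg : MemLp g ⊤ muT)
    (hgu : ∀ᵐ x ∂muT, ‖g x‖ = 1)
    (hOo : IsOuter Oo) (hker : InKerT g Oo) :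
    (IsMaximal g (conjC g Oo) ∧
      ∃ (I : UnitCircle → ℂ) (c : ℂ), IsInner I ∧ ‖c‖ = 1 ∧
        conjC g Oo =ᵐ[muT] fun x => I x * (c * Oo x)) ∧
    (∀ f₁ f₂ I₁ I₂ O : UnitCircle → ℂ,
      IsMaximal g f₁ → IsMaximal g f₂ → IsInner I₁ → IsInner I₂ → IsOuter O →
      (f₁ =ᵐ[muT] fun x => I₁ x * O x) → (f₂ =ᵐ[muT] fun x => I₂ x * O x) →
      ∃ c : ℂ, ‖c‖ = 1 ∧ f₁ =ᵐ[muT] fun x => c * f₂ x) := by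
  -- measurability and basic facts
  have hgm := hg.aestronglyMeasurable
  have hOom := hOo.1.1.aestronglyMeasurable
  have hzc : Continuous zf := (fourier 1).continuous
  set f : UnitCircle → ℂ := conjC g Oo with hf
  have hfm : AEStronglyMeasurable f muT :=
    ((Complex.continuous_conj.comp_aestronglyMeasurable hgm).mul
      ((Complex.continuous_conj.comp hzc).aestronglyMeasurable)).mul
      (Complex.continuous_conj.comp_aestronglyMeasurable hOom)
  have hnorm : ∀ᵐ x ∂muT, ‖f x‖ = ‖Oo x‖ := by
    filter_upwards [hgu] with x hx
    simp only [hf, conjC, norm_mul, RCLike.norm_conj, hx, norm_zf, one_mul]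
  have hf2 : MemLp f 2 muT :=
    hOo.1.1.of_le hfm (hnorm.mono fun x hx => le_of_eq hx)
  have hfcoef : ∀ n : ℤ, n < 0 → fourierCoeff f n = 0 := by
    intro n hn
    have h1 : fourierCoeff f n = conj (fourierCoeff (fun x => g x * zf x * Oo x) (-n)) := by
      rw [← fourierCoeff_conj]
      apply fourierCoeff_congr
      filter_upwards with x
      simp only [hf, conjC, map_mul]
    rw [h1]
    have h2 : fourierCoeff (fun x => g x * zf x * Oo x) (-n)
        = fourierCoeff (fun x => g x * Oo x) (-n - 1) := by
      have h3 : (fun x => g x * zf x * Oo x) = fun x => fourier 1 x * (g x * Oo x) := by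
        funext x; simp only [zf]; ring
      rw [h3, fourierCoeff_fourier_mul]
    rw [h2, hker.2 _ (by omega), map_zero]
  have hfH2 : InH2 f := ⟨hf2, hfcoef⟩
  -- the inner factor of `f = conjC g Oo`
  set O' := hOom.mk Oo with hO'
  set f' := hfm.mk f with hf'
  set I : UnitCircle → ℂ := fun x => if O' x = 0 then 1 else f' x / O' x with hI
  have hIm : AEStronglyMeasurable I muT := by
    apply Measurable.aestronglyMeasurable
    apply Measurable.ite
    · exact hOom.stronglyMeasurable_mk.measurable (measurableSet_singleton 0)
    · exact measurable_const
    · exact hfm.stronglyMeasurable_mk.measurable.div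
        hOom.stronglyMeasurable_mk.measurable
  have hfeq : f =ᵐ[muT] f' := hfm.ae_eq_mk
  have hOoeq : Oo =ᵐ[muT] O' := hOom.ae_eq_mk
  have hIOo : f =ᵐ[muT] fun x => I x * Oo x := by
    filter_upwards [hfeq, hOoeq, hnorm] with x h1 h2 h3
    by_cases h0 : O' x = 0
    · have hOox : Oo x = 0 := h2.trans h0
      have hfx : f x = 0 := by rw [← norm_eq_zero, h3, hOox, norm_zero]
      simp [hfx, hOox]
    · have hOox : Oo x ≠ 0 := by rw [h2]; exact h0
      simp only [hI, if_neg h0]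
      rw [h1, h2]
      exact (div_mul_cancel₀ _ h0).symm
  have hInorm : ∀ᵐ x ∂muT, ‖I x‖ = 1 := by
    filter_upwards [hfeq, hOoeq, hnorm] with x h1 h2 h3
    by_cases h0 : O' x = 0
    · simp [hI, h0]
    · have hOox : Oo x ≠ 0 := by rw [h2]; exact h0
      simp only [hI, if_neg h0, norm_div]
      rw [← h1, ← h2, h3]
      exact div_self (norm_ne_zero_iff.mpr hOox)
  have hIcoef : ∀ n : ℤ, n < 0 → fourierCoeff I n = 0 := by
    apply smirnov Oo I hOo hIm (hInorm.mono fun x hx => le_of_eq hx)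
    intro n hn
    rw [← fourierCoeff_congr hIOo n]
    exact hfcoef n hn
  have hI2 : MemLp I 2 muT :=
    (memLp_const (1:ℂ)).of_le hIm (hInorm.mono fun x hx => by rw [hx]; simp)
  have hIinner : IsInner I := ⟨⟨hI2, hIcoef⟩, hInorm⟩
  constructor
  · constructor
    · refine ⟨hfH2, Oo, hOo, ?_⟩
      filter_upwards [hgu] with x hx
      simp only [hf, conjC]
      calc g x * (conj (g x) * conj (zf x) * conj (Oo x))
          = (g x * conj (g x)) * (conj (zf x) * conj (Oo x)) := by ring
        _ = conj (zf x) * conj (Oo x) := by rw [unimod_mul_conj hx, one_mul]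
    · refine ⟨I, 1, hIinner, by simp, ?_⟩
      filter_upwards [hIOo] with x hx
      show f x = I x * (1 * Oo x)
      rw [hx, one_mul]
  · rintro f₁ f₂ I₁ I₂ O hm₁ hm₂ hI₁ hI₂ hO hf₁ hf₂
    obtain ⟨hf₁H, O₁, hO₁, heq₁⟩ := hm₁
    obtain ⟨hf₂H, O₂, hO₂, heq₂⟩ := hm₂
    have hrel : ∀ᵐ x ∂muT, conj (I₂ x) * O₁ x = conj (I₁ x) * O₂ x := by
      have hB : ∀ᵐ x ∂muT, I₂ x * conj (O₁ x) = I₁ x * conj (O₂ x) := by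
        filter_upwards [heq₁, heq₂, hf₁, hf₂] with x h1 h2 h3 h4
        have hz : conj (zf x) ≠ 0 := by
          simp only [ne_eq, map_eq_zero]
          intro hzz
          have hnz := norm_zf x
          rw [hzz, norm_zero] at hnz
          norm_num at hnz
        refine mul_left_cancel₀ hz ?_
        calc conj (zf x) * (I₂ x * conj (O₁ x))
            = I₂ x * (conj (zf x) * conj (O₁ x)) := by ring
          _ = I₂ x * (g x * f₁ x) := by rw [← h1]
          _ = I₂ x * (g x * (I₁ x * O x)) := by rw [h3]
          _ = I₁ x * (g x * (I₂ x * O x)) := by ring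
          _ = I₁ x * (g x * f₂ x) := by rw [← h4]
          _ = I₁ x * (conj (zf x) * conj (O₂ x)) := by rw [h2]
          _ = conj (zf x) * (I₁ x * conj (O₂ x)) := by ring
      filter_upwards [hB] with x hx
      have h5 := congrArg conj hx
      simpa [map_mul] using h5
    set φ : UnitCircle → ℂ := fun x => I₁ x * conj (I₂ x) with hφ
    have hI₁m := hI₁.1.1.aestronglyMeasurable
    have hI₂m := hI₂.1.1.aestronglyMeasurable
    have hφm : AEStronglyMeasurable φ muT :=
      hI₁m.mul (Complex.continuous_conj.comp_aestronglyMeasurable hI₂m)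
    have hφnorm : ∀ᵐ x ∂muT, ‖φ x‖ = 1 := by
      filter_upwards [hI₁.2, hI₂.2] with x h1 h2
      simp [hφ, norm_mul, h1, RCLike.norm_conj, h2]
    have hφO₁ : (fun x => φ x * O₁ x) =ᵐ[muT] O₂ := by
      filter_upwards [hrel, hI₁.2] with x h1 h2
      calc φ x * O₁ x = I₁ x * (conj (I₂ x) * O₁ x) := by simp only [hφ]; ring
        _ = I₁ x * (conj (I₁ x) * O₂ x) := by rw [h1]
        _ = (I₁ x * conj (I₁ x)) * O₂ x := by ring
        _ = O₂ x := by rw [unimod_mul_conj h2, one_mul]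
    have hψO₂ : (fun x => conj (φ x) * O₂ x) =ᵐ[muT] O₁ := by
      filter_upwards [hrel, hI₂.2] with x h1 h2
      calc conj (φ x) * O₂ x
          = I₂ x * (conj (I₁ x) * O₂ x) := by
            simp only [hφ, map_mul, Complex.conj_conj]; ring
        _ = I₂ x * (conj (I₂ x) * O₁ x) := by rw [← h1]
        _ = (I₂ x * conj (I₂ x)) * O₁ x := by ring
        _ = O₁ x := by rw [unimod_mul_conj h2, one_mul]
    have hφcoefneg : ∀ n : ℤ, n < 0 → fourierCoeff φ n = 0 := by
      apply smirnov O₁ φ hO₁ hφm (hφnorm.mono fun x hx => le_of_eq hx)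
      intro n hn
      rw [fourierCoeff_congr hφO₁ n]
      exact hO₂.1.2 n hn
    have hφcoefpos : ∀ n : ℤ, 0 < n → fourierCoeff φ n = 0 := by
      intro n hn
      have h1 : ∀ m : ℤ, m < 0 → fourierCoeff (fun x => conj (φ x)) m = 0 := by
        apply smirnov O₂ _ hO₂ (Complex.continuous_conj.comp_aestronglyMeasurable hφm)
          (hφnorm.mono fun x hx => by rw [RCLike.norm_conj, hx])
        intro m hm
        rw [fourierCoeff_congr hψO₂ m]
        exact hO₁.1.2 m hm
      have h2 := h1 (-n) (by omega)
      rw [fourierCoeff_conj, neg_neg] at h2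
      simpa using congrArg conj h2
    have hφ2 : MemLp φ 2 muT :=
      (memLp_const (1:ℂ)).of_le hφm (hφnorm.mono fun x hx => by rw [hx]; simp)
    have hφconst : φ =ᵐ[muT] fun _ => fourierCoeff φ 0 :=
      eq_const_of_fourierCoeff φ hφ2 (fun n hn => by
        rcases lt_or_gt_of_ne hn with h | h
        · exact hφcoefneg n h
        · exact hφcoefpos n h)
    set c : ℂ := fourierCoeff φ 0 with hc
    have hcnorm : ‖c‖ = 1 := by
      obtain ⟨x, h1, h2⟩ := (hφconst.and hφnorm).exists
      have h1' : φ x = c := h1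
      rw [← h1']; exact h2
    refine ⟨c, hcnorm, ?_⟩
    filter_upwards [hf₁, hf₂, hφconst, hI₂.2] with x h1 h2 h3 h4
    calc f₁ x = I₁ x * O x := h1
      _ = I₁ x * (conj (I₂ x) * I₂ x) * O x := by rw [unimod_conj_mul h4, mul_one]
      _ = φ x * (I₂ x * O x) := by simp only [hφ]; ring
      _ = c * f₂ x := by rw [h3, ← h2]

end ToeplitzKernels
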